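/- In the formal power series ring ℚ[[q]] one has exp( ∑_{l≥1} 2 q^{2l-1} / ( (2l-1)(1 + q^{2l-1}) ) ) = ∏_{m≥1} ( (1 + q^m)/(1 - q^m) )^{(-1)^{m+1}}. (This is the square of the identity exp(∑_{l≥1} q^{2l-1}/((2l-1)(1+q^{2l-1}))) = ∏_{m≥1}((1+q^m)/(1-q^m))^{(-1)^{m+1}/2} used in the computation of orbifold signatures of symmetric products.) -/

import Mathlib

/-!
STATEMENT 12.  In `ℚ[[q]]`:
`exp (∑_{l≥1} 2 q^{2l-1} / ((2l-1)(1+q^{2l-1}))) = ∏_{m≥1} ((1+q^m)/(1-q^m))^{(-1)^{m+1}}`.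

The exponents `(-1)^{m+1} = ±1` are integer powers of units of `ℚ[[q]]`; the
identity is formalized in the field `ℚ((q))` of formal Laurent series
(`LaurentSeries ℚ`), where `zpow` and inverses are available, `q` being the
image of `PowerSeries.X`.  The `l`-th summand is `≡ 0 mod q^{2l-1}` and the
`m`-th factor is `≡ 1 mod q^m`, so the infinite sum and product converge
`q`-adically; they are rendered coefficientwise: the series inside `exp` is
defined by truncating the sum at `l ≤ M` for its `q^M` coefficient (as
`2l-1 ≥ l`), and the identity is asserted for each `q^N`-coefficient with the
product truncated at `m ≤ N`.  `pexp f` is the exponential `∑_j f^j/j!` of a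
power series with zero constant term, defined by the finite sums
`coeff N (pexp f) = ∑_{j≤N} coeff N (f^j)/j!`.
-/

open PowerSeries Finset

/-- The exponential of a formal power series (with zero constant term) over a
`ℚ`-algebra: `pexp f = ∑_{j≥0} f^j / j!`. -/
noncomputable def pexp {R : Type*} [CommRing R] [Algebra ℚ R] (f : PowerSeries R) :
    PowerSeries R :=
  PowerSeries.mk fun n =>
    ∑ j ∈ Finset.range (n + 1),
      algebraMap ℚ R (1 / j.factorial) * PowerSeries.coeff n (f ^ j)

/-- `∑_{l≥1} 2 q^{2l-1}/((2l-1)(1+q^{2l-1}))`, defined coefficientwise (the `l`-th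
summand is `≡ 0 mod q^{2l-1}` and `2l-1 ≥ l`, so only `l ≤ M` contribute to the
`q^M` coefficient). -/
noncomputable def sumSeries12 : PowerSeries ℚ :=
  PowerSeries.mk fun M => PowerSeries.coeff M
    (∑ l ∈ Finset.Icc 1 M, (2 * ((2 * l - 1 : ℕ) : ℚ)⁻¹) •
      ((PowerSeries.X : PowerSeries ℚ) ^ (2 * l - 1) *
        (1 + (PowerSeries.X : PowerSeries ℚ) ^ (2 * l - 1))⁻¹))

/-- The variable `q` of `ℚ((q))`. -/
noncomputable def qL : LaurentSeries ℚ := ((PowerSeries.X : PowerSeries ℚ) : LaurentSeries ℚ)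


/-!
Both sides have constant term `1`, and over a field of characteristic zero a power series with
nonzero constant term is determined modulo `X ^ (N + 1)` by its constant term and its logarithmic
derivative modulo `X ^ N`. The logarithmic derivative of `exp S` is `S'`, that of the product is
the sum over its factors, and `((1 + q^m)/(1 - q^m))^((-1)^(m+1)) = (1 - (-q)^m)/(1 + (-q)^m)`.
Expanding geometric series, `q S'` and `q` times the logarithmic derivative of the product both
become `∑_{d odd, j ≥ 1} 2 (-1)^(j+1) j q^(d j)`: the summand `l` of `S` gives the terms with
`d = 2l - 1`, the factor `m` those with `j = m`, so comparing coefficients of `q^n` amounts to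
regrouping a sum over the factorizations `n = d j`.
-/

namespace PowerSeries

theorem coeff_pow_eq_zero_of_lt {R : Type*} [CommRing R] {f : R⟦X⟧}
    (hf : constantCoeff f = 0) {n j : ℕ} (h : n < j) : coeff n (f ^ j) = 0 :=
  X_pow_dvd_iff.mp (pow_dvd_pow_of_dvd (X_dvd_iff.mpr hf) j) n h

theorem X_pow_succ_dvd_sub_constantCoeff {R : Type*} [CommRing R] [IsAddTorsionFree R]
    {f : R⟦X⟧} {N : ℕ} (h : X ^ N ∣ d⁄dX R f) : X ^ (N + 1) ∣ f - C (constantCoeff f) := by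
  rw [X_pow_dvd_iff]
  rintro (_ | n) hn
  · simp
  · have hd : coeff (n + 1) f * (n + 1) = 0 := by
      rw [← coeff_derivative]
      exact X_pow_dvd_iff.mp h n (by omega)
    rw [← Nat.cast_succ, mul_comm, ← nsmul_eq_mul] at hd
    simpa [coeff_C] using (smul_eq_zero.mp hd).resolve_left n.succ_ne_zero

section Exp

variable {R : Type*} [CommRing R] [Algebra ℚ R] {f : R⟦X⟧}

theorem pexp_eq_subst_exp (hf : constantCoeff f = 0) : pexp f = (exp R).subst f := by
  ext n
  rw [pexp, coeff_mk, coeff_subst' (HasSubst.of_constantCoeff_zero' hf),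
    finsum_eq_sum_of_support_subset (s := range (n + 1))]
  · simp [smul_eq_mul]
  · intro j hj
    by_contra hjn
    exact hj (by simp [coeff_pow_eq_zero_of_lt hf (by simpa using hjn)])

theorem constantCoeff_pexp (f : R⟦X⟧) : constantCoeff (pexp f) = 1 := by
  rw [← coeff_zero_eq_constantCoeff_apply, pexp, coeff_mk]
  simp

theorem derivative_pexp (hf : constantCoeff f = 0) :
    d⁄dX R (pexp f) = d⁄dX R f * pexp f := by
  rw [pexp_eq_subst_exp hf, derivative_subst (HasSubst.of_constantCoeff_zero' hf),
    derivative_exp, mul_comm]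

end Exp

section LogDeriv

variable {k : Type*} [Field k] {f g : k⟦X⟧}

noncomputable def logDeriv (f : k⟦X⟧) : k⟦X⟧ := d⁄dX k f * f⁻¹

theorem derivative_eq_logDeriv_mul (hf : constantCoeff f ≠ 0) :
    d⁄dX k f = logDeriv f * f := by
  rw [logDeriv, mul_assoc, PowerSeries.inv_mul_cancel f hf, mul_one]

theorem logDeriv_mul (hf : constantCoeff f ≠ 0) (hg : constantCoeff g ≠ 0) :
    logDeriv (f * g) = logDeriv f + logDeriv g := by
  simp only [logDeriv, Derivation.leibniz, smul_eq_mul, PowerSeries.mul_inv_rev]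
  linear_combination (d⁄dX k g * g⁻¹) * PowerSeries.mul_inv_cancel f hf +
    (d⁄dX k f * f⁻¹) * PowerSeries.mul_inv_cancel g hg

theorem logDeriv_inv (hf : constantCoeff f ≠ 0) : logDeriv f⁻¹ = -logDeriv f := by
  have hf' : f⁻¹⁻¹ = f := by
    rw [PowerSeries.inv_eq_iff_mul_eq_one (by simpa using hf), PowerSeries.mul_inv_cancel f hf]
  rw [logDeriv, logDeriv, derivative_inv', hf']
  linear_combination (-(d⁄dX k f * f⁻¹)) * PowerSeries.mul_inv_cancel f hf

theorem logDeriv_prod {ι : Type*} (s : Finset ι) (f : ι → k⟦X⟧)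
    (hf : ∀ i ∈ s, constantCoeff (f i) ≠ 0) :
    logDeriv (∏ i ∈ s, f i) = ∑ i ∈ s, logDeriv (f i) := by
  classical
  induction s using Finset.induction_on with
  | empty => simp [logDeriv]
  | insert a s ha ih =>
    rw [prod_insert ha, sum_insert ha, logDeriv_mul (hf a (mem_insert_self a s)),
      ih fun i hi => hf i (mem_insert_of_mem hi)]
    rw [map_prod]
    exact prod_ne_zero_iff.mpr fun i hi => hf i (mem_insert_of_mem hi)

theorem logDeriv_pexp [Algebra ℚ k] (hf : constantCoeff f = 0) :
    logDeriv (pexp f) = d⁄dX k f := by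
  rw [logDeriv, derivative_pexp hf, mul_assoc,
    PowerSeries.mul_inv_cancel _ ((constantCoeff_pexp f).trans_ne one_ne_zero), mul_one]

theorem X_pow_succ_dvd_sub_of_X_pow_dvd_logDeriv_sub [CharZero k] {N : ℕ}
    (hfg : constantCoeff f = constantCoeff g) (hg : constantCoeff g ≠ 0)
    (h : X ^ N ∣ logDeriv f - logDeriv g) : X ^ (N + 1) ∣ f - g := by
  have hf : constantCoeff f ≠ 0 := hfg ▸ hg
  set w := f * g⁻¹ with hw
  have hw1 : constantCoeff w = 1 := by simp [hw, hfg, hg]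
  have hlog : logDeriv w = logDeriv f - logDeriv g := by
    rw [hw, logDeriv_mul hf (by simpa using hg), logDeriv_inv hg, sub_eq_add_neg]
  have hdw : X ^ N ∣ d⁄dX k w := by
    rw [derivative_eq_logDeriv_mul (hw1.trans_ne one_ne_zero), hlog]
    exact h.mul_right w
  have hfg' : f - g = (w - C (constantCoeff w)) * g := by
    rw [hw1, map_one, sub_mul, hw, mul_assoc, PowerSeries.inv_mul_cancel g hg, mul_one, one_mul]
  rw [hfg']
  exact (X_pow_succ_dvd_sub_constantCoeff hdw).mul_right g

theorem coe_inv (hf : constantCoeff f ≠ 0) :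
    ((f⁻¹ : k⟦X⟧) : LaurentSeries k) = (f : LaurentSeries k)⁻¹ :=
  eq_inv_of_mul_eq_one_left (by rw [← map_mul, PowerSeries.inv_mul_cancel f hf, map_one])

end LogDeriv

section Geometric

variable {k : Type*} [Field k] {d : ℕ}

theorem constantCoeff_one_sub_C_mul_X_pow_ne_zero (a : k) (hd : d ≠ 0) :
    constantCoeff (1 - C a * X ^ d : k⟦X⟧) ≠ 0 := by
  simp [hd]

theorem inv_one_sub_C_mul_X_pow (a : k) (hd : d ≠ 0) :
    (1 - C a * X ^ d : k⟦X⟧)⁻¹ = expand d hd (rescale a (mk 1)) := by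
  rw [PowerSeries.inv_eq_iff_mul_eq_one (constantCoeff_one_sub_C_mul_X_pow_ne_zero a hd)]
  have := congrArg (fun f => expand d hd (rescale a f)) (mk_one_mul_one_sub_eq_one (S := k))
  simpa [rescale_X, expand_X, expand_C] using this

theorem coeff_inv_one_sub_C_mul_X_pow (a : k) (hd : d ≠ 0) (n : ℕ) :
    coeff n (1 - C a * X ^ d : k⟦X⟧)⁻¹ = if d ∣ n then a ^ (n / d) else 0 := by
  simp [inv_one_sub_C_mul_X_pow a hd, coeff_expand, coeff_rescale]

theorem X_mul_logDeriv_one_sub_C_mul_X_pow (a : k) (hd : d ≠ 0) :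
    X * logDeriv (1 - C a * X ^ d : k⟦X⟧) = (d : k⟦X⟧) * (1 - (1 - C a * X ^ d)⁻¹) := by
  have hX : (X : k⟦X⟧) * X ^ (d - 1) = X ^ d := mul_pow_sub_one hd X
  have hinv := PowerSeries.mul_inv_cancel _ (constantCoeff_one_sub_C_mul_X_pow_ne_zero a hd)
  simp only [logDeriv, map_sub, derivative_one, Derivation.leibniz, derivative_C, smul_eq_mul,
    derivative_pow, derivative_X]
  linear_combination (-(C a) * d * (1 - C a * X ^ d)⁻¹) * hX + d * hinv

theorem coeff_logDeriv_one_sub_C_mul_X_pow (a : k) (hd : d ≠ 0) (n : ℕ) :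
    coeff n (logDeriv (1 - C a * X ^ d : k⟦X⟧)) =
      if d ∣ n + 1 then -(d * a ^ ((n + 1) / d)) else 0 := by
  rw [← coeff_succ_X_mul, X_mul_logDeriv_one_sub_C_mul_X_pow a hd, ← map_natCast C,
    coeff_C_mul, map_sub, coeff_inv_one_sub_C_mul_X_pow a hd, coeff_one, if_neg n.succ_ne_zero]
  split_ifs <;> ring

theorem coeff_X_pow_mul_inv_one_add_X_pow (hd : d ≠ 0) {n : ℕ} (hn : n ≠ 0) :
    coeff n (X ^ d * (1 + X ^ d)⁻¹ : k⟦X⟧) = if d ∣ n then -(-1) ^ (n / d) else 0 := by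
  have h1 : (1 + X ^ d : k⟦X⟧) = 1 - C (-1) * X ^ d := by simp
  have hinv := PowerSeries.mul_inv_cancel _ (constantCoeff_one_sub_C_mul_X_pow_ne_zero (-1 : k) hd)
  have hC : C (-1 : k) = -1 := by simp
  have h2 : (X ^ d * (1 + X ^ d)⁻¹ : k⟦X⟧) = 1 - (1 - C (-1) * X ^ d)⁻¹ := by
    rw [h1]; linear_combination hinv + (X ^ d * (1 - C (-1) * X ^ d)⁻¹) * hC
  rw [h2, map_sub, coeff_one, if_neg hn, coeff_inv_one_sub_C_mul_X_pow _ hd]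
  split_ifs <;> ring

end Geometric

end PowerSeries

theorem Nat.sum_Icc_ite_dvd {M : Type*} [AddCommMonoid M] (f : ℕ → M) {n K : ℕ} (hn : n ≠ 0)
    (hK : n ≤ K) : ∑ d ∈ Icc 1 K, (if d ∣ n then f d else 0) = ∑ d ∈ n.divisors, f d := by
  rw [← sum_filter]
  refine sum_congr ?_ fun _ _ => rfl
  ext d
  simp only [mem_filter, mem_Icc, Nat.mem_divisors]
  constructor
  · rintro ⟨_, hd⟩
    exact ⟨hd, hn⟩
  · rintro ⟨hd, -⟩
    exact ⟨⟨Nat.pos_of_dvd_of_pos hd (by omega), (Nat.le_of_dvd (by omega) hd).trans hK⟩, hd⟩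

theorem Finset.sum_Icc_comp_two_mul_sub_one {M : Type*} [AddCommMonoid M] (f : ℕ → M) (K : ℕ) :
    ∑ l ∈ Icc 1 K, f (2 * l - 1) = ∑ d ∈ Icc 1 (2 * K), if Odd d then f d else 0 := by
  induction K with
  | zero => simp
  | succ K ih =>
    have hodd : Odd (2 * K + 1) := odd_two_mul_add_one K
    have heven : ¬Odd (2 * K + 1 + 1) := by simp [parity_simps]
    rw [sum_Icc_succ_top (by omega), ih, show 2 * (K + 1) = 2 * K + 1 + 1 by ring,
      sum_Icc_succ_top (by omega), sum_Icc_succ_top (by omega), if_pos hodd, if_neg heven,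
      Nat.add_sub_cancel, add_zero]

def lambertWeight (d j : ℕ) : ℚ := if Odd d then 2 * (-1) ^ (j + 1) * j else 0

theorem coeff_derivative_sumSeries12 (n : ℕ) :
    coeff n (d⁄dX ℚ sumSeries12) =
      ∑ x ∈ (n + 1).divisorsAntidiagonal, lambertWeight x.1 x.2 := by
  have hterm : ∀ d ∈ Icc 1 (2 * (n + 1)),
      coeff (n + 1) ((2 * (d : ℚ)⁻¹) • (X ^ d * (1 + X ^ d)⁻¹ : ℚ⟦X⟧)) * (n + 1) =
        if d ∣ n + 1 then 2 * (-1 : ℚ) ^ ((n + 1) / d + 1) * ((n + 1) / d : ℕ) else 0 := by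
    intro d hd
    have hd0 : d ≠ 0 := Nat.one_le_iff_ne_zero.mp (mem_Icc.mp hd).1
    rw [coeff_smul, smul_eq_mul, coeff_X_pow_mul_inv_one_add_X_pow hd0 (by omega : n + 1 ≠ 0)]
    split_ifs with hdvd
    · obtain ⟨j, hj⟩ := hdvd
      have hcast : (n : ℚ) + 1 = d * j := by exact_mod_cast hj
      rw [hj, Nat.mul_div_cancel_left j (Nat.pos_of_ne_zero hd0), hcast]
      field_simp
      ring
    · simp
  rw [coeff_derivative, sumSeries12, coeff_mk, map_sum, sum_mul,
    sum_Icc_comp_two_mul_sub_one (fun d => coeff (n + 1)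
      ((2 * (d : ℚ)⁻¹) • (X ^ d * (1 + X ^ d)⁻¹ : ℚ⟦X⟧)) * (n + 1))]
  rw [Nat.sum_divisorsAntidiagonal lambertWeight,
    ← Nat.sum_Icc_ite_dvd _ n.succ_ne_zero (by omega : n + 1 ≤ 2 * (n + 1))]
  refine sum_congr rfl fun d hd => ?_
  rw [hterm d hd, lambertWeight]
  split_ifs <;> rfl

noncomputable def prodFactor (m : ℕ) : ℚ⟦X⟧ := (1 - (-X) ^ m) * (1 + (-X) ^ m)⁻¹

theorem one_sub_neg_X_pow (m : ℕ) : (1 - (-X) ^ m : ℚ⟦X⟧) = 1 - C ((-1) ^ m) * X ^ m := by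
  rw [neg_pow, map_pow, map_neg, map_one]

theorem one_add_neg_X_pow (m : ℕ) : (1 + (-X) ^ m : ℚ⟦X⟧) = 1 - C (-(-1) ^ m) * X ^ m := by
  rw [neg_pow, map_neg, map_pow, map_neg, map_one, neg_mul, sub_neg_eq_add]

theorem constantCoeff_prodFactor {m : ℕ} (hm : 0 < m) : constantCoeff (prodFactor m) = 1 := by
  simp [prodFactor, hm.ne']

theorem coeff_logDeriv_prodFactor {m : ℕ} (hm : 0 < m) (n : ℕ) :
    coeff n (logDeriv (prodFactor m)) =
      if m ∣ n + 1 then lambertWeight ((n + 1) / m) m else 0 := by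
  have h1 := constantCoeff_one_sub_C_mul_X_pow_ne_zero ((-1 : ℚ) ^ m) hm.ne'
  have h2 := constantCoeff_one_sub_C_mul_X_pow_ne_zero (-(-1 : ℚ) ^ m) hm.ne'
  rw [prodFactor, one_sub_neg_X_pow, one_add_neg_X_pow,
    PowerSeries.logDeriv_mul h1 (by simpa using h2), PowerSeries.logDeriv_inv h2, map_add,
    map_neg, coeff_logDeriv_one_sub_C_mul_X_pow _ hm.ne',
    coeff_logDeriv_one_sub_C_mul_X_pow _ hm.ne']
  split_ifs with h
  · set j := (n + 1) / m
    rw [neg_pow ((-1 : ℚ) ^ m), ← pow_mul, mul_comm m j, pow_mul, lambertWeight]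
    rcases Nat.even_or_odd j with hj | hj
    · rw [hj.neg_one_pow, if_neg (Nat.not_odd_iff_even.mpr hj)]
      ring
    · rw [hj.neg_one_pow, if_pos hj]
      ring
  · simp

theorem coeff_sum_logDeriv_prodFactor {n N : ℕ} (hn : n < N) :
    coeff n (∑ m ∈ Icc 1 N, logDeriv (prodFactor m)) =
      ∑ x ∈ (n + 1).divisorsAntidiagonal, lambertWeight x.1 x.2 := by
  rw [map_sum, sum_congr rfl fun m hm => coeff_logDeriv_prodFactor (mem_Icc.mp hm).1 n,
    Nat.sum_Icc_ite_dvd _ n.succ_ne_zero hn, Nat.sum_divisorsAntidiagonal' lambertWeight]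

theorem coeff_pexp_sumSeries12 (N : ℕ) :
    coeff N (pexp sumSeries12) = coeff N (∏ m ∈ Icc 1 N, prodFactor m) := by
  have hS : constantCoeff sumSeries12 = 0 := by
    rw [← coeff_zero_eq_constantCoeff_apply, sumSeries12, coeff_mk]
    simp
  have hP : constantCoeff (∏ m ∈ Icc 1 N, prodFactor m) = 1 := by
    rw [map_prod]
    exact prod_eq_one fun m hm => constantCoeff_prodFactor (mem_Icc.mp hm).1
  have hlog : X ^ N ∣ PowerSeries.logDeriv (pexp sumSeries12) -
      PowerSeries.logDeriv (∏ m ∈ Icc 1 N, prodFactor m) := by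
    rw [logDeriv_pexp hS, PowerSeries.logDeriv_prod _ _ fun m hm =>
      (constantCoeff_prodFactor (mem_Icc.mp hm).1).trans_ne
        one_ne_zero, X_pow_dvd_iff]
    intro n hn
    rw [map_sub, coeff_derivative_sumSeries12, coeff_sum_logDeriv_prodFactor hn, sub_self]
  have hdvd := X_pow_succ_dvd_sub_of_X_pow_dvd_logDeriv_sub (by rw [constantCoeff_pexp, hP])
    (hP.trans_ne one_ne_zero) hlog
  exact sub_eq_zero.mp (by simpa using X_pow_dvd_iff.mp hdvd N (by omega))

theorem coe_prodFactor {m : ℕ} (hm : 0 < m) :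
    (prodFactor m : LaurentSeries ℚ) = ((1 + qL ^ m) * (1 - qL ^ m)⁻¹) ^ ((-1 : ℤ) ^ (m + 1)) := by
  rw [prodFactor, map_mul, coe_inv (by simp [hm.ne']), map_sub, map_add, map_one, map_pow,
    map_neg, qL]
  rcases Nat.even_or_odd m with hm | hm
  · rw [hm.neg_pow, (hm.add_one).neg_one_pow, zpow_neg_one, mul_inv_rev, inv_inv, mul_comm]
  · rw [hm.neg_pow, (hm.add_one).neg_one_pow, zpow_one, sub_neg_eq_add, ← sub_eq_add_neg]

theorem exp_sum_eq_prod_one_add_div_one_sub_alternating (N : ℕ) :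
    ((pexp sumSeries12 : PowerSeries ℚ) : LaurentSeries ℚ).coeff (N : ℤ) =
      (∏ m ∈ Finset.Icc 1 N,
        ((1 + qL ^ m) * (1 - qL ^ m)⁻¹) ^ ((-1 : ℤ) ^ (m + 1))).coeff (N : ℤ) := by
  rw [← prod_congr rfl fun m hm => coe_prodFactor (mem_Icc.mp hm).1,
    ← map_prod (HahnSeries.ofPowerSeries ℤ ℚ), LaurentSeries.coeff_coe_powerSeries,
    LaurentSeries.coeff_coe_powerSeries, coeff_pexp_sumSeries12]
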